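/- If X has a symmetric distribution about μ₀ ∈ H, i.e. X − μ₀ and μ₀ − X have the same distribution, then the population trimmed mean satisfies μ(P) = μ₀. -/
import Mathlib


open MeasureTheory
open scoped RealInnerProductSpace

/-- `F_P(t; v) = P(‖X − v‖ ≤ t)`. -/
noncomputable def Fpop {H : Type*} [NormedAddCommGroup H] [MeasurableSpace H]
    (P : Measure H) (t : ℝ) (v : H) : ℝ :=
  (P {x | ‖x - v‖ ≤ t}).toReal

/-- The α-radius `r_P(v) = inf {t ≥ 0 : F_P(t; v) ≥ α}`. -/
noncomputable def rpop {H : Type*} [NormedAddCommGroup H] [MeasurableSpace H]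
    (α : ℝ) (P : Measure H) (v : H) : ℝ :=
  sInf {t : ℝ | 0 ≤ t ∧ α ≤ Fpop P t v}

/-- `G_P(t) = P(r_P(X) ≤ t)`. -/
noncomputable def Gpop {H : Type*} [NormedAddCommGroup H] [MeasurableSpace H]
    (α : ℝ) (P : Measure H) (t : ℝ) : ℝ :=
  (P {x | rpop α P x ≤ t}).toReal

/-- The population weight function `w_P(v) = g(G_P(r_P(v)))`. -/
noncomputable def wpop {H : Type*} [NormedAddCommGroup H] [MeasurableSpace H]
    (g : ℝ → ℝ) (α : ℝ) (P : Measure H) (v : H) : ℝ :=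
  g (Gpop α P (rpop α P v))

/-- The population trimmed mean `μ(P) = E_P[w_P(X)X] / E_P[w_P(X)]`. -/
noncomputable def meanPop {H : Type*} [NormedAddCommGroup H] [InnerProductSpace ℝ H]
    [CompleteSpace H] [MeasurableSpace H] (g : ℝ → ℝ) (α : ℝ) (P : Measure H) : H :=
  (∫ x, wpop g α P x ∂P)⁻¹ • ∫ x, wpop g α P x • x ∂P

/-- The population trimmed covariance operator
`C(P)(h) = E_P[w_P(X)⟨X − μ(P), h⟩(X − μ(P))] / E_P[w_P(X)]`. -/
noncomputable def covPop {H : Type*} [NormedAddCommGroup H] [InnerProductSpace ℝ H]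
    [CompleteSpace H] [MeasurableSpace H] (g : ℝ → ℝ) (α : ℝ) (P : Measure H) (h : H) : H :=
  (∫ x, wpop g α P x ∂P)⁻¹ •
    ∫ x, (wpop g α P x * ⟪x - meanPop g α P, h⟫) • (x - meanPop g α P) ∂P


open Filter Topology

section AuxTrim

variable {H : Type*} [NormedAddCommGroup H] [MeasurableSpace H]

lemma exists_nat_measure_gt (P : Measure H) [IsProbabilityMeasure P] {s : ℕ → Set H}
    (hmono : Monotone s) (hU : (⋃ n, s n) = Set.univ) {a : ℝ} (ha : a < 1) :
    ∃ n : ℕ, a < (P (s n)).toReal := by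
  have htend := tendsto_measure_iUnion_atTop (μ := P) hmono
  rw [hU, measure_univ] at htend
  by_contra hcon
  push_neg at hcon
  have hle : (1 : ENNReal) ≤ ENNReal.ofReal a :=
    le_of_tendsto htend (Filter.Eventually.of_forall fun n => by
      show P (s n) ≤ ENNReal.ofReal a
      rw [← ENNReal.ofReal_toReal (measure_ne_top P (s n))]
      exact ENNReal.ofReal_le_ofReal (hcon n))
  exact absurd hle (ENNReal.ofReal_lt_one.2 ha).not_ge

lemma Fpop_mono (P : Measure H) [IsProbabilityMeasure P] (v : H) :
    Monotone fun t => Fpop P t v := fun s t hst =>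
  ENNReal.toReal_mono (measure_ne_top P _) (measure_mono fun x hx => le_trans hx hst)

lemma rpop_set_nonempty {α : ℝ} (hα1 : α < 1) (P : Measure H) [IsProbabilityMeasure P] (v : H) :
    {t : ℝ | 0 ≤ t ∧ α ≤ Fpop P t v}.Nonempty := by
  have hmono : Monotone fun n : ℕ => {x : H | ‖x - v‖ ≤ (n : ℝ)} := by
    intro m n hmn x hx
    exact le_trans hx (Nat.cast_le.mpr hmn : (m:ℝ) ≤ n)
  have hU : (⋃ n : ℕ, {x : H | ‖x - v‖ ≤ (n : ℝ)}) = Set.univ := by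
    ext x
    simp only [Set.mem_iUnion, Set.mem_setOf_eq, Set.mem_univ, iff_true]
    exact exists_nat_ge ‖x - v‖
  obtain ⟨n, hn⟩ := exists_nat_measure_gt P hmono hU hα1
  exact ⟨n, Nat.cast_nonneg n, hn.le⟩

lemma rpop_nonneg {α : ℝ} (hα1 : α < 1) (P : Measure H) [IsProbabilityMeasure P] (v : H) :
    0 ≤ rpop α P v :=
  le_csInf (rpop_set_nonempty hα1 P v) fun _ ht => ht.1

lemma alpha_le_Fpop_rpop [BorelSpace H] {α : ℝ} (hα1 : α < 1)
    (P : Measure H) [IsProbabilityMeasure P] (v : H) :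
    α ≤ Fpop P (rpop α P v) v := by
  have hne := rpop_set_nonempty hα1 P v
  have hbdd : BddBelow {t : ℝ | 0 ≤ t ∧ α ≤ Fpop P t v} := ⟨0, fun t ht => ht.1⟩
  obtain ⟨u, huanti, hutend, humem⟩ := exists_seq_tendsto_sInf hne hbdd
  have hmeas : ∀ n : ℕ, MeasurableSet {x : H | ‖x - v‖ ≤ u n} := fun n =>
    (isClosed_le ((continuous_id.sub continuous_const).norm) continuous_const).measurableSet
  have hanti : Antitone fun n : ℕ => {x : H | ‖x - v‖ ≤ u n} := fun m n hmn x hx =>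
    le_trans hx (huanti hmn)
  have hInter : (⋂ n : ℕ, {x : H | ‖x - v‖ ≤ u n}) = {x : H | ‖x - v‖ ≤ rpop α P v} := by
    ext x
    simp only [Set.mem_iInter, Set.mem_setOf_eq]
    constructor
    · intro hx
      exact ge_of_tendsto hutend (Filter.Eventually.of_forall hx)
    · intro hx n
      exact le_trans hx (csInf_le hbdd (humem n))
  have htend := tendsto_measure_iInter_atTop (μ := P) (fun n => (hmeas n).nullMeasurableSet) hanti
    ⟨0, measure_ne_top P _⟩
  rw [hInter] at htend
  have hle : ENNReal.ofReal α ≤ P {x : H | ‖x - v‖ ≤ rpop α P v} :=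
    ge_of_tendsto htend (Filter.Eventually.of_forall fun n =>
      (ENNReal.ofReal_le_iff_le_toReal (measure_ne_top P _)).2 (humem n).2)
  exact (ENNReal.ofReal_le_iff_le_toReal (measure_ne_top P _)).1 hle

end AuxTrim

section AuxTrim2

variable {H : Type*} [NormedAddCommGroup H] [MeasurableSpace H] [BorelSpace H]

lemma rpop_le_iff {α : ℝ} (hα1 : α < 1) (P : Measure H) [IsProbabilityMeasure P]
    {v : H} {c : ℝ} (hc : 0 ≤ c) :
    rpop α P v ≤ c ↔ α ≤ Fpop P c v := by
  constructor
  · intro h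
    exact le_trans (alpha_le_Fpop_rpop hα1 P v) (Fpop_mono P v h)
  · intro h
    exact csInf_le ⟨0, fun t ht => ht.1⟩ ⟨hc, h⟩

lemma measurable_Fpop [SecondCountableTopology H] (P : Measure H) [IsProbabilityMeasure P]
    (c : ℝ) : Measurable fun v : H => Fpop P c v := by
  have hset : MeasurableSet {p : H × H | ‖p.2 - p.1‖ ≤ c} :=
    (isClosed_le ((continuous_snd.sub continuous_fst).norm) continuous_const).measurableSet
  have h1 : Measurable fun p : H × H =>
      ({p : H × H | ‖p.2 - p.1‖ ≤ c}.indicator (fun _ => (1 : ENNReal)) p) :=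
    measurable_const.indicator hset
  have h2 := Measurable.lintegral_prod_right' (ν := P) h1
  have heq : (fun v : H => P {x : H | ‖x - v‖ ≤ c}) = fun v : H =>
      ∫⁻ x, ({p : H × H | ‖p.2 - p.1‖ ≤ c}.indicator (fun _ => (1 : ENNReal)) (v, x)) ∂P := by
    funext v
    have hsec : (fun x : H =>
        ({p : H × H | ‖p.2 - p.1‖ ≤ c}.indicator (fun _ => (1 : ENNReal)) (v, x)))
        = {x : H | ‖x - v‖ ≤ c}.indicator 1 := by
      funext x
      by_cases h : ‖x - v‖ ≤ c <;> simp [Set.indicator, h]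
    rw [hsec]
    exact (lintegral_indicator_one
      (isClosed_le ((continuous_id.sub continuous_const).norm) continuous_const).measurableSet).symm
  have : Measurable fun v : H => P {x : H | ‖x - v‖ ≤ c} := by
    rw [heq]; exact h2
  exact this.ennreal_toReal

lemma measurable_rpop [SecondCountableTopology H] {α : ℝ} (hα1 : α < 1)
    (P : Measure H) [IsProbabilityMeasure P] : Measurable (rpop α P) := by
  apply measurable_of_Iic
  intro c
  by_cases hc : 0 ≤ c
  · have : rpop α P ⁻¹' Set.Iic c = {v : H | α ≤ Fpop P c v} := by
      ext v
      simp only [Set.mem_preimage, Set.mem_Iic, Set.mem_setOf_eq]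
      exact rpop_le_iff hα1 P hc
    rw [this]
    exact measurableSet_le measurable_const (measurable_Fpop P c)
  · have : rpop α P ⁻¹' Set.Iic c = ∅ := by
      ext v
      simp only [Set.mem_preimage, Set.mem_Iic, Set.mem_empty_iff_false, iff_false, not_le]
      exact lt_of_lt_of_le (lt_of_not_ge hc) (rpop_nonneg hα1 P v)
    rw [this]
    exact MeasurableSet.empty

lemma Gpop_mono {α : ℝ} (P : Measure H) [IsProbabilityMeasure P] : Monotone (Gpop α P) :=
  fun s t hst => ENNReal.toReal_mono (measure_ne_top P _)
    (measure_mono fun x hx => le_trans hx hst)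

lemma Gpop_mem_Icc {α : ℝ} (P : Measure H) [IsProbabilityMeasure P] (t : ℝ) :
    Gpop α P t ∈ Set.Icc (0 : ℝ) 1 := by
  refine ⟨ENNReal.toReal_nonneg, ?_⟩
  exact ENNReal.toReal_le_of_le_ofReal zero_le_one (by rw [ENNReal.ofReal_one]; exact prob_le_one)

end AuxTrim2

/-- If `X ∼ P` has a symmetric distribution about `μ₀` (i.e. `X − μ₀`
and `μ₀ − X` have the same distribution), then the population trimmed mean satisfies
`μ(P) = μ₀`. -/
theorem meanPop_of_symmetric
    {H : Type*} [NormedAddCommGroup H] [InnerProductSpace ℝ H] [CompleteSpace H]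
    [SecondCountableTopology H] [MeasurableSpace H] [BorelSpace H]
    (P : Measure H) [IsProbabilityMeasure P]
    (α β : ℝ) (hα : 0 < α) (hα' : α ≤ 1 / 2) (hβ : 0 < β) (hβ' : β ≤ 1 / 2)
    (g : ℝ → ℝ)
    (hg_nonneg : ∀ t ∈ Set.Icc (0 : ℝ) 1, 0 ≤ g t)
    (hg_bdd : BddAbove (g '' Set.Icc (0 : ℝ) 1))
    (hg_mono : AntitoneOn g (Set.Icc (0 : ℝ) 1))
    (hg_pos : ∀ t ∈ Set.Icc (0 : ℝ) 1, t < 1 - β → 0 < g t)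
    (hg_zero : ∀ t ∈ Set.Icc (0 : ℝ) 1, 1 - β ≤ t → g t = 0)
    (hE : 0 < ∫ x, wpop g α P x ∂P)
    (μ₀ : H)
    (hsym : Measure.map (fun x => x - μ₀) P = Measure.map (fun x => μ₀ - x) P) :
    meanPop g α P = μ₀ := by
  classical
  have hα1 : α < 1 := lt_of_le_of_lt hα' (by norm_num)
  set w : H → ℝ := wpop g α P with hw
  -- measurability of the weight
  have hrmeas : Measurable (rpop α P) := measurable_rpop hα1 P
  have hGmono : Monotone (Gpop α P) := Gpop_mono P
  have hGmeas : Measurable (Gpop α P) := hGmono.measurable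
  have hGIcc : ∀ t, Gpop α P t ∈ Set.Icc (0 : ℝ) 1 := Gpop_mem_Icc P
  set g' : ℝ → ℝ := fun t => g (min 1 (max 0 t)) with hg'
  have hclampIcc : ∀ t : ℝ, min 1 (max 0 t) ∈ Set.Icc (0 : ℝ) 1 := fun t =>
    ⟨le_min zero_le_one (le_max_left 0 t), min_le_left 1 _⟩
  have hg'anti : Antitone g' := by
    intro s t hst
    exact hg_mono (hclampIcc s) (hclampIcc t)
      (min_le_min le_rfl (max_le_max le_rfl hst))
  have hg'eq : ∀ t ∈ Set.Icc (0 : ℝ) 1, g' t = g t := by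
    intro t ht
    rw [hg']
    simp only [max_eq_right ht.1, min_eq_right ht.2]
  have hweq : w = fun v => g' (Gpop α P (rpop α P v)) := by
    funext v
    rw [hw]
    unfold wpop
    rw [hg'eq _ (hGIcc _)]
  have hwmeas : Measurable w := by
    rw [hweq]
    exact hg'anti.measurable.comp (hGmeas.comp hrmeas)
  have hwval : ∀ v, w v = g (Gpop α P (rpop α P v)) := fun v => rfl
  have hwnonneg : ∀ v, 0 ≤ w v := fun v => hg_nonneg _ (hGIcc _)
  obtain ⟨M, hM⟩ := hg_bdd
  have hwle : ∀ v, w v ≤ M := fun v => hM ⟨_, hGIcc _, rfl⟩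
  have hM0 : 0 ≤ M := le_trans (hg_nonneg 0 ⟨le_rfl, zero_le_one⟩)
    (hM ⟨0, ⟨le_rfl, zero_le_one⟩, rfl⟩)
  -- bounded support
  have hβ1 : 1 - β < 1 := by linarith
  obtain ⟨cn, hcn⟩ : ∃ n : ℕ, 1 - β < (P {x : H | rpop α P x ≤ (n : ℝ)}).toReal := by
    have hmono : Monotone fun n : ℕ => {x : H | rpop α P x ≤ (n : ℝ)} := by
      intro m n hmn x hx
      exact le_trans hx (Nat.cast_le.mpr hmn : (m:ℝ) ≤ n)
    have hU : (⋃ n : ℕ, {x : H | rpop α P x ≤ (n : ℝ)}) = Set.univ := by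
      ext x
      simp only [Set.mem_iUnion, Set.mem_setOf_eq, Set.mem_univ, iff_true]
      exact exists_nat_ge (rpop α P x)
    exact exists_nat_measure_gt P hmono hU hβ1
  set c : ℝ := (cn : ℝ) with hc
  have hc0 : 0 ≤ c := Nat.cast_nonneg cn
  have hcG : 1 - β ≤ Gpop α P c := hcn.le
  obtain ⟨Rn, hRn⟩ : ∃ n : ℕ, 1 - α < (P {x : H | ‖x‖ ≤ (n : ℝ)}).toReal := by
    have hmono : Monotone fun n : ℕ => {x : H | ‖x‖ ≤ (n : ℝ)} := by
      intro m n hmn x hx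
      exact le_trans hx (Nat.cast_le.mpr hmn : (m:ℝ) ≤ n)
    have hU : (⋃ n : ℕ, {x : H | ‖x‖ ≤ (n : ℝ)}) = Set.univ := by
      ext x
      simp only [Set.mem_iUnion, Set.mem_setOf_eq, Set.mem_univ, iff_true]
      exact exists_nat_ge ‖x‖
    exact exists_nat_measure_gt P hmono hU (by linarith)
  set R : ℝ := (Rn : ℝ) with hR
  have hR0 : 0 ≤ R := Nat.cast_nonneg Rn
  have hsupp : ∀ v, w v ≠ 0 → ‖v‖ ≤ c + R := by
    intro v hv
    have hGr : Gpop α P (rpop α P v) < 1 - β := by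
      by_contra h
      push_neg at h
      exact hv (by rw [hwval]; exact hg_zero _ (hGIcc _) h)
    have hrc : rpop α P v ≤ c := by
      by_contra h
      push_neg at h
      exact absurd (le_trans hcG (hGmono h.le)) (not_le.mpr hGr)
    have hF : α ≤ Fpop P c v := (rpop_le_iff hα1 P hc0).1 hrc
    have hBmeas : MeasurableSet {x : H | ‖x‖ ≤ R} :=
      (isClosed_le continuous_norm continuous_const).measurableSet
    have hinter : ({x : H | ‖x - v‖ ≤ c} ∩ {x : H | ‖x‖ ≤ R}).Nonempty := by
      by_contra hemp
      rw [Set.not_nonempty_iff_eq_empty] at hemp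
      have hsum := measure_union_add_inter (μ := P) {x : H | ‖x - v‖ ≤ c} hBmeas
      rw [hemp, measure_empty, add_zero] at hsum
      have h1 : (P {x : H | ‖x - v‖ ≤ c}).toReal + (P {x : H | ‖x‖ ≤ R}).toReal ≤ 1 := by
        rw [← ENNReal.toReal_add (measure_ne_top P _) (measure_ne_top P _), ← hsum]
        exact ENNReal.toReal_le_of_le_ofReal zero_le_one
          (by rw [ENNReal.ofReal_one]; exact prob_le_one)
      have h2 : α ≤ (P {x : H | ‖x - v‖ ≤ c}).toReal := hF
      linarith
    obtain ⟨x, hx1, hx2⟩ := hinter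
    calc ‖v‖ = ‖v - x + x‖ := by rw [sub_add_cancel]
      _ ≤ ‖v - x‖ + ‖x‖ := norm_add_le _ _
      _ ≤ c + R := add_le_add (by rw [norm_sub_rev]; exact hx1) hx2
  -- integrability
  have hwint : Integrable w P :=
    ⟨hwmeas.aestronglyMeasurable, HasFiniteIntegral.of_bounded (C := M)
      (Filter.Eventually.of_forall fun v => by
        rw [Real.norm_eq_abs, abs_of_nonneg (hwnonneg v)]; exact hwle v)⟩
  have hfmeas : Measurable fun x : H => w x • x := hwmeas.smul measurable_id
  have hfint : Integrable (fun x : H => w x • x) P := by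
    refine ⟨hfmeas.aestronglyMeasurable, HasFiniteIntegral.of_bounded (C := M * (c + R))
      (Filter.Eventually.of_forall fun v => ?_)⟩
    rw [norm_smul, Real.norm_eq_abs, abs_of_nonneg (hwnonneg v)]
    by_cases hv : w v = 0
    · rw [hv, zero_mul]
      positivity
    · exact mul_le_mul (hwle v) (hsupp v hv) (norm_nonneg v) hM0
  -- the reflection
  set S : H → H := fun x => μ₀ - x + μ₀ with hS
  have hSmeas : Measurable S := (measurable_const.sub measurable_id).add_const _
  have hSmap : Measure.map S P = P := by
    have h1 : Measurable fun x : H => x - μ₀ := measurable_id.sub_const _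
    have h2 : Measurable fun x : H => μ₀ - x := measurable_const.sub measurable_id
    have h3 : Measurable fun y : H => y + μ₀ := measurable_id.add_const _
    have hcongr := congrArg (Measure.map fun y : H => y + μ₀) hsym
    rw [Measure.map_map h3 h1, Measure.map_map h3 h2] at hcongr
    have hl : ((fun y : H => y + μ₀) ∘ fun x : H => x - μ₀) = id := by
      funext x; simp
    have hr : ((fun y : H => y + μ₀) ∘ fun x : H => μ₀ - x) = S := by
      funext x; simp [hS]
    rw [hl, hr, Measure.map_id] at hcongr
    exact hcongr.symm
  have hSsub : ∀ x v : H, S x - S v = v - x := by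
    intro x v
    simp only [hS]
    abel
  have hFS : ∀ t (v : H), Fpop P t (S v) = Fpop P t v := by
    intro t v
    unfold Fpop
    congr 1
    conv_lhs => rw [← hSmap]
    have hball : MeasurableSet {x : H | ‖x - S v‖ ≤ t} :=
      (isClosed_le ((continuous_id.sub continuous_const).norm) continuous_const).measurableSet
    rw [Measure.map_apply hSmeas hball]
    congr 1
    ext x
    simp only [Set.mem_preimage, Set.mem_setOf_eq]
    rw [hSsub x v, norm_sub_rev]
  have hrS : ∀ v : H, rpop α P (S v) = rpop α P v := by
    intro v
    have hseteq : {t : ℝ | 0 ≤ t ∧ α ≤ Fpop P t (S v)} = {t : ℝ | 0 ≤ t ∧ α ≤ Fpop P t v} := by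
      ext t
      simp only [Set.mem_setOf_eq, hFS]
    unfold rpop
    rw [hseteq]
  have hwS : ∀ v : H, w (S v) = w v := by
    intro v
    rw [hwval, hwval, hrS]
  -- the symmetry computation
  have hA : ∫ x, w x • x ∂P = ∫ x, w (S x) • S x ∂P := by
    conv_lhs => rw [← hSmap]
    exact integral_map hSmeas.aemeasurable
      (by rw [hSmap]; exact hfmeas.aestronglyMeasurable)
  have hA2 : (fun x : H => w (S x) • S x) = fun x : H => (2 * w x) • μ₀ - w x • x := by
    funext x
    rw [hwS]
    simp only [hS]
    rw [smul_add, smul_sub, show (2 : ℝ) * w x = w x + w x from two_mul _, add_smul]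
    abel
  rw [hA2, integral_sub ((hwint.const_mul 2).smul_const μ₀) hfint,
    integral_smul_const, integral_const_mul] at hA
  have h2A : ∫ x, w x • x ∂P = (∫ x, w x ∂P) • μ₀ := by
    have h := eq_sub_iff_add_eq.mp hA
    have h2 : (2 : ℝ) • (∫ x, w x • x ∂P) = (2 : ℝ) • ((∫ x, w x ∂P) • μ₀) := by
      rw [two_smul ℝ, h, mul_smul]
    exact smul_right_injective H two_ne_zero h2
  show (∫ x, w x ∂P)⁻¹ • ∫ x, w x • x ∂P = μ₀
  rw [h2A, ← mul_smul, inv_mul_cancel₀ hE.ne', one_smul]
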